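/- Sufficient condition for CRCQ (claim of the paper's remark 'Ensuring CRCQ'). Assume X_r is compact; that ∇b(u) ≠ 0 for every (x,u) ∈ X_r with b(u) = 0; that (∂h_r/∂u)(x,u) ≠ 0 for every (x,u) ∈ X_r with h_r(x,u) = 0; and that there exists c < 1 such that for every (x,u) ∈ X_r with b(u) = 0 and h_r(x,u) = 0 one has |⟨∇b(u), ((∂h_r/∂u)(x,u))^T⟩| ≤ c·‖∇b(u)‖·‖(∂h_r/∂u)(x,u)‖. Then CRCQ holds for QP at every (x,u) ∈ X_r. -/

import Mathlib

/-!
At a point of `X_r` the gradients of the active constraints are linearly independent: each is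
nonzero, and when both are active the angle condition with `c < 1` is a strict Cauchy–Schwarz
inequality. Both gradients depend continuously on `(x, u)` (each step of the recursion defining
`h_i` uses one derivative of `h` and of `f`, so `h_r` is `C¹`), and linear independence of finitely
many vectors is an open condition. Hence on a neighbourhood every subfamily of the active
gradients stays linearly independent, and its rank is its cardinality.
-/

open Set Filter Topology
open scoped RealInnerProductSpace

noncomputable def hseq {n m : ℕ}
    (f : EuclideanSpace ℝ (Fin n) × EuclideanSpace ℝ (Fin m) → EuclideanSpace ℝ (Fin n))
    (h : EuclideanSpace ℝ (Fin n) → ℝ) (β : ℝ) :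
    ℕ → EuclideanSpace ℝ (Fin n) × EuclideanSpace ℝ (Fin m) → ℝ
  | 0 => fun p => h p.1
  | i + 1 => fun p =>
      fderiv ℝ (fun x => hseq f h β i (x, p.2)) p.1 (f p) + β * hseq f h β i p

noncomputable def Xset {n m : ℕ}
    (f : EuclideanSpace ℝ (Fin n) × EuclideanSpace ℝ (Fin m) → EuclideanSpace ℝ (Fin n))
    (h : EuclideanSpace ℝ (Fin n) → ℝ) (b : EuclideanSpace ℝ (Fin m) → ℝ) (β : ℝ) (i : ℕ) :
    Set (EuclideanSpace ℝ (Fin n) × EuclideanSpace ℝ (Fin m)) :=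
  {p | 0 ≤ h p.1 ∧ 0 ≤ b p.2 ∧ 0 ≤ hseq f h β i p}

noncomputable def QPfeas {n m : ℕ}
    (f : EuclideanSpace ℝ (Fin n) × EuclideanSpace ℝ (Fin m) → EuclideanSpace ℝ (Fin n))
    (h : EuclideanSpace ℝ (Fin n) → ℝ) (b : EuclideanSpace ℝ (Fin m) → ℝ) (β : ℝ)
    (r : ℕ) (α γ : ℝ) (p : EuclideanSpace ℝ (Fin n) × EuclideanSpace ℝ (Fin m)) :
    Set (EuclideanSpace ℝ (Fin m)) :=
  {q | 0 ≤ ⟪gradient b p.2, q⟫ + α * b p.2 ∧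
       0 ≤ fderiv ℝ (fun x => hseq f h β r (x, p.2)) p.1 (f p)
         + fderiv ℝ (fun u => hseq f h β r (p.1, u)) p.2 q + γ * hseq f h β r p}

noncomputable def QPobj {n m : ℕ}
    (Φ : EuclideanSpace ℝ (Fin n) → ℝ) (w : EuclideanSpace ℝ (Fin m) → EuclideanSpace ℝ (Fin n))
    (ε : ℝ) (p : EuclideanSpace ℝ (Fin n) × EuclideanSpace ℝ (Fin m))
    (q : EuclideanSpace ℝ (Fin m)) : ℝ :=
  (1 / 2) * ‖q + ε • (ContinuousLinearMap.adjoint (fderiv ℝ w p.2)) (gradient Φ p.1)‖ ^ 2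

noncomputable def lieD {n m : ℕ}
    (f : EuclideanSpace ℝ (Fin n) × EuclideanSpace ℝ (Fin m) → EuclideanSpace ℝ (Fin n))
    (h : EuclideanSpace ℝ (Fin n) → ℝ) :
    ℕ → EuclideanSpace ℝ (Fin n) × EuclideanSpace ℝ (Fin m) → ℝ
  | 0 => fun p => h p.1
  | i + 1 => fun p => fderiv ℝ (fun x => lieD f h i (x, p.2)) p.1 (f p)

/-- The two constraint gradients (w.r.t. the decision variable `q`) of the controller QP,
as a family indexed by `Fin 2`, evaluated at the point `p = (x,u)`:
the gradient of the input constraint is `∇b(u)`, and the gradient of the high-order CBF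
constraint is `((∂h_r/∂u)(x,u))ᵀ`. -/
noncomputable def constraintGrads {n m : ℕ}
    (f : EuclideanSpace ℝ (Fin n) × EuclideanSpace ℝ (Fin m) → EuclideanSpace ℝ (Fin n))
    (h : EuclideanSpace ℝ (Fin n) → ℝ) (b : EuclideanSpace ℝ (Fin m) → ℝ) (β : ℝ) (r : ℕ)
    (p : EuclideanSpace ℝ (Fin n) × EuclideanSpace ℝ (Fin m)) :
    Fin 2 → EuclideanSpace ℝ (Fin m) :=
  ![gradient b p.2, gradient (fun u => hseq f h β r (p.1, u)) p.2]

/-- The constant-rank constraint qualification (CRCQ) for the controller QP at a point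
`p = (x,u)`: there is a neighborhood `V` of `p` such that every subfamily of the gradients of
the constraints active at `p` (the input constraint is active iff `b(u) = 0`; the high-order CBF
constraint is active iff `h_r(x,u) = 0`) has constant rank as the evaluation point ranges
over `V`. -/
noncomputable def CRCQ {n m : ℕ}
    (f : EuclideanSpace ℝ (Fin n) × EuclideanSpace ℝ (Fin m) → EuclideanSpace ℝ (Fin n))
    (h : EuclideanSpace ℝ (Fin n) → ℝ) (b : EuclideanSpace ℝ (Fin m) → ℝ) (β : ℝ) (r : ℕ)
    (p : EuclideanSpace ℝ (Fin n) × EuclideanSpace ℝ (Fin m)) : Prop :=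
  ∃ V ∈ nhds p, ∀ S : Set (Fin 2),
    (S ⊆ {i | (i = 0 ∧ b p.2 = 0) ∨ (i = 1 ∧ hseq f h β r p = 0)}) →
    ∀ p₁ ∈ V, ∀ p₂ ∈ V,
      Module.finrank ℝ (Submodule.span ℝ (constraintGrads f h b β r p₁ '' S))
        = Module.finrank ℝ (Submodule.span ℝ (constraintGrads f h b β r p₂ '' S))

open ContinuousLinearMap

section LinearIndependence

variable {𝕜 V : Type*}

theorem linearIndepOn_fin_two [DivisionRing 𝕜] [AddCommGroup V] [Module 𝕜 V]
    {v : Fin 2 → V} {A : Set (Fin 2)} (h₀ : 0 ∈ A → v 0 ≠ 0) (h₁ : 1 ∈ A → v 1 ≠ 0)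
    (h₀₁ : 0 ∈ A → 1 ∈ A → LinearIndependent 𝕜 v) : LinearIndepOn 𝕜 v A := by
  by_cases hA₀ : (0 : Fin 2) ∈ A <;> by_cases hA₁ : (1 : Fin 2) ∈ A
  · exact (h₀₁ hA₀ hA₁).linearIndepOn A
  · refine ((linearIndepOn_singleton_iff 𝕜).2 (h₀ hA₀)).mono fun i hi => ?_
    fin_cases i <;> simp_all
  · refine ((linearIndepOn_singleton_iff 𝕜).2 (h₁ hA₁)).mono fun i hi => ?_
    fin_cases i <;> simp_all
  · refine (linearIndepOn_empty 𝕜 v).mono fun i hi => ?_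
    fin_cases i <;> simp_all

theorem LinearIndepOn.finrank_span_image [DivisionRing 𝕜] [AddCommGroup V] [Module 𝕜 V]
    {ι : Type*} [Finite ι] {v : ι → V} {s : Set ι} (hs : LinearIndepOn 𝕜 v s) :
    Module.finrank 𝕜 (Submodule.span 𝕜 (v '' s)) = s.ncard := by
  rw [Module.finrank, ← Cardinal.toNat_toENat, toENat_rank_span_set hs, Set.ncard]

theorem LinearIndepOn.eventually_finrank_span_image [NontriviallyNormedField 𝕜]
    [CompleteSpace 𝕜] [NormedAddCommGroup V] [NormedSpace 𝕜 V] {X ι : Type*} [TopologicalSpace X]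
    [Finite ι] {v : X → ι → V} {x : X} (hv : ContinuousAt v x) {A : Set ι}
    (hA : LinearIndepOn 𝕜 (v x) A) :
    ∀ᶠ y in 𝓝 x, ∀ S ⊆ A, Module.finrank 𝕜 (Submodule.span 𝕜 (v y '' S)) = S.ncard := by
  have hcont : ContinuousAt (fun y (i : A) => v y i) x :=
    continuousAt_pi.2 fun i => (continuous_apply (i : ι)).continuousAt.comp hv
  filter_upwards [hcont.eventually hA.linearIndependent.eventually] with y hy S hS
  exact (LinearIndepOn.mono hy hS).finrank_span_image

end LinearIndependence

theorem linearIndependent_of_abs_real_inner_lt {F : Type*} [NormedAddCommGroup F]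
    [InnerProductSpace ℝ F] {x y : F} (hxy : |⟪x, y⟫| < ‖x‖ * ‖y‖) :
    LinearIndependent ℝ ![x, y] := by
  rw [linearIndependent_fin2]
  constructor
  · rintro rfl
    simp at hxy
  · intro a ha
    simp only [Matrix.cons_val_one, Matrix.cons_val_zero] at ha
    rw [← ha, real_inner_smul_left, real_inner_self_eq_norm_mul_norm, norm_smul, abs_mul,
      Real.norm_eq_abs, abs_mul, abs_norm, mul_assoc] at hxy
    exact lt_irrefl _ hxy

section Gradient

variable {E F : Type*} [NormedAddCommGroup E] [NormedSpace ℝ E]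
  [NormedAddCommGroup F] [InnerProductSpace ℝ F] [CompleteSpace F]

theorem ContDiff.continuous_gradient {g : F → ℝ} (hg : ContDiff ℝ 1 g) :
    Continuous (gradient g) :=
  (InnerProductSpace.toDual ℝ F).symm.continuous.comp (hg.continuous_fderiv one_ne_zero)

theorem gradient_snd_eq {g : E × F → ℝ} {p : E × F} (hg : DifferentiableAt ℝ g p) :
    gradient (fun u => g (p.1, u)) p.2
      = (InnerProductSpace.toDual ℝ F).symm ((fderiv ℝ g p).comp (inr ℝ E F)) :=
  congrArg _ (hg.hasFDerivAt.comp p.2 (hasFDerivAt_prodMk_right p.1 p.2)).fderiv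

theorem ContDiff.continuous_gradient_snd {g : E × F → ℝ} (hg : ContDiff ℝ 1 g) :
    Continuous fun p : E × F => gradient (fun u => g (p.1, u)) p.2 := by
  simp_rw [gradient_snd_eq ((hg.differentiable one_ne_zero) _)]
  exact (InnerProductSpace.toDual ℝ F).symm.continuous.comp
    ((hg.continuous_fderiv one_ne_zero).clm_comp continuous_const)

end Gradient

section ControlBarrier

variable {n m : ℕ}
  (f : EuclideanSpace ℝ (Fin n) × EuclideanSpace ℝ (Fin m) → EuclideanSpace ℝ (Fin n))
  (h : EuclideanSpace ℝ (Fin n) → ℝ) (b : EuclideanSpace ℝ (Fin m) → ℝ) (β : ℝ)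

theorem hseq_succ_eq {i : ℕ} (hi : Differentiable ℝ (hseq f h β i)) :
    hseq f h β (i + 1)
      = fun p => fderiv ℝ (hseq f h β i) p (f p, 0) + β * hseq f h β i p := by
  funext p
  have hx : fderiv ℝ (fun x => hseq f h β i (x, p.2)) p.1
      = (fderiv ℝ (hseq f h β i) p).comp (inl ℝ _ _) :=
    ((hi p).hasFDerivAt.comp p.1 (hasFDerivAt_prodMk_left p.1 p.2)).fderiv
  simp [hseq, hx]

theorem contDiff_hseq {N : ℕ} (hf : ContDiff ℝ N f) (hh : ContDiff ℝ (N + 1 : ℕ) h)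
    (i k : ℕ) (hk : i + k ≤ N + 1) : ContDiff ℝ k (hseq f h β i) := by
  induction i generalizing k with
  | zero =>
    exact (hh.of_le (by norm_cast; omega)).comp contDiff_fst
  | succ i ih =>
    have hi : ContDiff ℝ (k + 1 : ℕ) (hseq f h β i) := ih (k + 1) (by omega)
    rw [hseq_succ_eq f h β (hi.differentiable (by simp))]
    have hfd : ContDiff ℝ k (fderiv ℝ (hseq f h β i)) := hi.fderiv_right (by norm_cast)
    have hf' : ContDiff ℝ k fun p => ((f p, 0) : _ × EuclideanSpace ℝ (Fin m)) :=
      (hf.of_le (by exact_mod_cast (by omega : k ≤ N))).prodMk contDiff_const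
    exact (hfd.clm_apply hf').add (contDiff_const.mul (hi.of_le (by norm_cast; omega)))

variable {f h b β}

theorem continuous_constraintGrads {r : ℕ} (hb : ContDiff ℝ 1 b)
    (hr : ContDiff ℝ 1 (hseq f h β r)) : Continuous (constraintGrads f h b β r) :=
  (hb.continuous_gradient.comp continuous_snd).matrixVecCons
    (hr.continuous_gradient_snd.matrixVecCons continuous_const)

theorem crcq_of_linearIndepOn_active {r : ℕ}
    {p : EuclideanSpace ℝ (Fin n) × EuclideanSpace ℝ (Fin m)}
    (hcont : Continuous (constraintGrads f h b β r))
    (hp : LinearIndepOn ℝ (constraintGrads f h b β r p)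
      {i | (i = 0 ∧ b p.2 = 0) ∨ (i = 1 ∧ hseq f h β r p = 0)}) :
    CRCQ f h b β r p := by
  refine ⟨_, hp.eventually_finrank_span_image hcont.continuousAt, fun S hS p₁ h₁ p₂ h₂ => ?_⟩
  rw [h₁ S hS, h₂ S hS]

end ControlBarrier

theorem crcq_sufficient_condition_general
    {n m r : ℕ}
    (f : EuclideanSpace ℝ (Fin n) × EuclideanSpace ℝ (Fin m) → EuclideanSpace ℝ (Fin n))
    (h : EuclideanSpace ℝ (Fin n) → ℝ) (b : EuclideanSpace ℝ (Fin m) → ℝ)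
    (hf : ContDiff ℝ (r + 1 : ℕ) f) (hh : ContDiff ℝ (r + 2 : ℕ) h) (hb : ContDiff ℝ 2 b)
    (β : ℝ)
    (hbgrad : ∀ p ∈ Xset f h b β r, b p.2 = 0 → gradient b p.2 ≠ 0)
    (hhgrad : ∀ p ∈ Xset f h b β r, hseq f h β r p = 0 →
      gradient (fun u => hseq f h β r (p.1, u)) p.2 ≠ 0)
    (hindep : ∃ c < (1 : ℝ), ∀ p ∈ Xset f h b β r, b p.2 = 0 → hseq f h β r p = 0 →
      |⟪gradient b p.2, gradient (fun u => hseq f h β r (p.1, u)) p.2⟫|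
        ≤ c * ‖gradient b p.2‖ * ‖gradient (fun u => hseq f h β r (p.1, u)) p.2‖) :
    ∀ p ∈ Xset f h b β r, CRCQ f h b β r p := by
  intro p hp
  obtain ⟨c, hc, hcs⟩ := hindep
  have hr : ContDiff ℝ 1 (hseq f h β r) := contDiff_hseq f h β hf hh r 1 (by omega)
  refine crcq_of_linearIndepOn_active (continuous_constraintGrads (hb.of_le one_le_two) hr) ?_
  refine linearIndepOn_fin_two (fun hb₀ => ?_) (fun hh₀ => ?_) fun hb₀ hh₀ => ?_
  · exact hbgrad p hp (by simpa using hb₀)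
  · exact hhgrad p hp (by simpa using hh₀)
  · replace hb₀ : b p.2 = 0 := by simpa using hb₀
    replace hh₀ : hseq f h β r p = 0 := by simpa using hh₀
    have hpos := mul_pos (norm_pos_iff.2 (hbgrad p hp hb₀)) (norm_pos_iff.2 (hhgrad p hp hh₀))
    refine linearIndependent_of_abs_real_inner_lt ((hcs p hp hb₀ hh₀).trans_lt ?_)
    nlinarith

/-- Sufficient condition for CRCQ (claim of the paper's remark "Ensuring CRCQ"): if `X_r` is
compact, the active constraint gradients are nonvanishing, and `∇b(u)` and `((∂h_r/∂u)(x,u))ᵀ`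
are linearly independent in a non-vanishing fashion on the set where both constraints are
active, then CRCQ holds for the controller QP at every point of `X_r`. -/
theorem crcq_sufficient_condition
    {n m r : ℕ} (hn : 0 < n) (hm : 0 < m) (hr : 0 < r)
    (f : EuclideanSpace ℝ (Fin n) × EuclideanSpace ℝ (Fin m) → EuclideanSpace ℝ (Fin n))
    (h : EuclideanSpace ℝ (Fin n) → ℝ) (b : EuclideanSpace ℝ (Fin m) → ℝ)
    (hf : ContDiff ℝ (r + 1 : ℕ) f) (hh : ContDiff ℝ (r + 2 : ℕ) h) (hb : ContDiff ℝ 2 b)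
    (β : ℝ) (hβ : 0 < β)
    (hcomp : IsCompact (Xset f h b β r))
    (hbgrad : ∀ p ∈ Xset f h b β r, b p.2 = 0 → gradient b p.2 ≠ 0)
    (hhgrad : ∀ p ∈ Xset f h b β r, hseq f h β r p = 0 →
      gradient (fun u => hseq f h β r (p.1, u)) p.2 ≠ 0)
    (hindep : ∃ c < (1 : ℝ), ∀ p ∈ Xset f h b β r, b p.2 = 0 → hseq f h β r p = 0 →
      |⟪gradient b p.2, gradient (fun u => hseq f h β r (p.1, u)) p.2⟫|
        ≤ c * ‖gradient b p.2‖ * ‖gradient (fun u => hseq f h β r (p.1, u)) p.2‖) :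
    ∀ p ∈ Xset f h b β r, CRCQ f h b β r p :=
  crcq_sufficient_condition_general f h b hf hh hb β hbgrad hhgrad hindep
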